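/- For all integers n ≥ 1, 1 ≤ i ≤ n-1 and k ≥ 1: C(n-i,k)·C(i-1,k-1) - C(n-i-1,k)·C(i,k-1) = C(n-i-1,k-1)·C(i,k-1) - C(n-i,k)·C(i-1,k-2). -/

import Mathlib

/-! Expanding `C(n-i,k)` and `C(i,k-1)` by Pascal's rule turns both sides into
`C(n-i-1,k-1)·C(i-1,k-1) - C(n-i-1,k)·C(i-1,k-2)`. With the zero convention, Pascal's rule
`C(a,b) = C(a-1,b) + C(a-1,b-1)` holds for every integer `b` as soon as `a ≥ 1`. -/

/-- The binomial coefficient `C(a,b)` for integer arguments, with the convention that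
`C(a,b) = 0` unless `0 ≤ b ≤ a`. -/
def Cb (a b : ℤ) : ℚ :=
  if 0 ≤ b ∧ b ≤ a then (a.toNat.choose b.toNat : ℚ) else 0

lemma Cb_natCast (m j : ℕ) : Cb m j = m.choose j := by
  unfold Cb
  split_ifs with h
  · simp
  · rw [Nat.choose_eq_zero_of_lt (by omega), Nat.cast_zero]

lemma Cb_of_neg (a : ℤ) {b : ℤ} (hb : b < 0) : Cb a b = 0 :=
  if_neg fun h => by omega

lemma Cb_pascal {a : ℤ} (b : ℤ) (ha : 1 ≤ a) :
    Cb a b = Cb (a - 1) b + Cb (a - 1) (b - 1) := by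
  obtain ⟨m, rfl⟩ : ∃ m : ℕ, a = m + 1 := ⟨(a - 1).toNat, by omega⟩
  rcases lt_or_ge b 0 with hb | hb
  · rw [Cb_of_neg _ hb, Cb_of_neg _ hb, Cb_of_neg _ (by omega), add_zero]
  lift b to ℕ using hb
  rw [add_sub_cancel_right, ← Nat.cast_succ]
  cases b with
  | zero => rw [Cb_natCast, Cb_natCast, Cb_of_neg _ (by omega)]; simp
  | succ j =>
    rw [Nat.cast_succ j, add_sub_cancel_right, ← Nat.cast_succ, Cb_natCast, Cb_natCast, Cb_natCast,
      Nat.choose_succ_succ, Nat.cast_add, add_comm]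

theorem stmt16_general (n i k : ℤ) (hi1 : 1 ≤ i) (hi2 : i ≤ n - 1) :
    Cb (n - i) k * Cb (i - 1) (k - 1) - Cb (n - i - 1) k * Cb i (k - 1)
      = Cb (n - i - 1) (k - 1) * Cb i (k - 1) - Cb (n - i) k * Cb (i - 1) (k - 2) := by
  have hk : k - 1 - 1 = k - 2 := by ring
  rw [Cb_pascal k (by omega : 1 ≤ n - i), Cb_pascal (k - 1) hi1, hk]
  ring

/-- For `n ≥ 1`, `1 ≤ i ≤ n-1` and `k ≥ 1`:
`C(n-i,k)C(i-1,k-1) - C(n-i-1,k)C(i,k-1) = C(n-i-1,k-1)C(i,k-1) - C(n-i,k)C(i-1,k-2)`. -/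
theorem stmt16 (n i k : ℤ) (hn : 1 ≤ n) (hi1 : 1 ≤ i) (hi2 : i ≤ n - 1) (hk : 1 ≤ k) :
    Cb (n - i) k * Cb (i - 1) (k - 1) - Cb (n - i - 1) k * Cb i (k - 1)
      = Cb (n - i - 1) (k - 1) * Cb i (k - 1) - Cb (n - i) k * Cb (i - 1) (k - 2) :=
  stmt16_general n i k hi1 hi2
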